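/- Under the same directional spectral decompositions, G̃⁻¹ K = (Px ⊗ Py)(Ex Dx ⊗ Ey + Ex ⊗ Ey Dy)(Px⁻¹ ⊗ Py⁻¹), where K = Kx ⊗ My + Mx ⊗ Ky. -/
import Mathlib

open Matrix
open scoped Kronecker

lemma factorA {n : ℕ} (M P D : Matrix (Fin n) (Fin n) ℝ) (η : ℝ)
    (hP : IsUnit P.det) :
    M + η • (M * P * D * P⁻¹) = M * P * (1 + η • D) * P⁻¹ := by
  rw [mul_add, add_mul, mul_one, Matrix.mul_smul, Matrix.smul_mul,
    mul_assoc M P P⁻¹, mul_nonsing_inv _ hP, mul_one]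

lemma invA_mul {n : ℕ} (M P D : Matrix (Fin n) (Fin n) ℝ) (η : ℝ)
    (hM : IsUnit M.det) (hP : IsUnit P.det)
    (X : Matrix (Fin n) (Fin n) ℝ) :
    (M * P * (1 + η • D) * P⁻¹)⁻¹ * (M * P * X * P⁻¹)
      = P * ((1 + η • D)⁻¹ * X) * P⁻¹ := by
  rw [Matrix.mul_inv_rev, Matrix.mul_inv_rev, Matrix.mul_inv_rev,
    nonsing_inv_nonsing_inv _ hP]
  simp only [Matrix.mul_assoc]
  rw [nonsing_inv_mul_cancel_left _ _ hM, nonsing_inv_mul_cancel_left _ _ hP]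

lemma invA_M {n : ℕ} (M P D : Matrix (Fin n) (Fin n) ℝ) (η : ℝ)
    (hM : IsUnit M.det) (hP : IsUnit P.det) :
    (M * P * (1 + η • D) * P⁻¹)⁻¹ * M = P * (1 + η • D)⁻¹ * P⁻¹ := by
  have h := invA_mul M P D η hM hP 1
  rwa [mul_one, mul_nonsing_inv_cancel_right _ _ hP, mul_one] at h

theorem stmt_7 {nx ny : ℕ}
    (Mx Kx Px Dx : Matrix (Fin nx) (Fin nx) ℝ) (My Ky Py Dy : Matrix (Fin ny) (Fin ny) ℝ)
    (η : ℝ)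
    (hMx : IsUnit Mx.det) (hPx : IsUnit Px.det) (hDx : Dx.IsDiag)
    (hMy : IsUnit My.det) (hPy : IsUnit Py.det) (hDy : Dy.IsDiag)
    (hKx : Kx = Mx * Px * Dx * Px⁻¹) (hKy : Ky = My * Py * Dy * Py⁻¹)
    (hIx : IsUnit (1 + η • Dx).det) (hIy : IsUnit (1 + η • Dy).det)
    (Ex : Matrix (Fin nx) (Fin nx) ℝ) (Ey : Matrix (Fin ny) (Fin ny) ℝ)
    (hEx : Ex = (1 + η • Dx)⁻¹) (hEy : Ey = (1 + η • Dy)⁻¹)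
    (K Gt : Matrix (Fin nx × Fin ny) (Fin nx × Fin ny) ℝ)
    (hK : K = Kx ⊗ₖ My + Mx ⊗ₖ Ky)
    (hGt : Gt = (Mx + η • Kx) ⊗ₖ (My + η • Ky)) :
    Gt⁻¹ * K = (Px ⊗ₖ Py) * ((Ex * Dx) ⊗ₖ Ey + Ex ⊗ₖ (Ey * Dy)) * (Px⁻¹ ⊗ₖ Py⁻¹) := by
  subst hEx hEy hKx hKy hK hGt
  rw [factorA Mx Px Dx η hPx, factorA My Py Dy η hPy, Matrix.inv_kronecker,
    mul_add, ← mul_kronecker_mul, ← mul_kronecker_mul,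
    invA_mul Mx Px Dx η hMx hPx Dx, invA_mul My Py Dy η hMy hPy Dy,
    invA_M Mx Px Dx η hMx hPx, invA_M My Py Dy η hMy hPy,
    mul_add, add_mul, ← mul_kronecker_mul, ← mul_kronecker_mul,
    ← mul_kronecker_mul, ← mul_kronecker_mul]
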